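/- For KSPM(3), there exists a function L(k) = O(log k) such that for every k, letting s be the k-th avalanche: if max{j : j ∈ s} > L(k), then both L(k) and L(k)+1 are fired in s. -/

import Mathlib

/-- Effect of firing column `i` in KSPM(D), on height-difference configurations. -/
def step (D : ℕ) (σ : ℕ → ℕ) (i : ℕ) : ℕ → ℕ :=
  fun j =>
    if j = i then σ i - D
    else if j + 1 = i then σ j + (D - 1)
    else if j = i + D - 1 then σ j + 1
    else σ j

/-- Transition on column `i`: `σ →ᵢ σ'`. -/
def KTrans (D : ℕ) (σ : ℕ → ℕ) (i : ℕ) (σ' : ℕ → ℕ) : Prop :=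
  D ≤ σ i ∧ σ' = step D σ i

/-- A strategy (list of fired columns) is legal from `σ`. -/
def Legal (D : ℕ) : (ℕ → ℕ) → List ℕ → Prop
  | _, [] => True
  | σ, i :: s => D ≤ σ i ∧ Legal D (step D σ i) s

/-- Configuration obtained by applying a strategy. -/
def applyStrat (D : ℕ) : (ℕ → ℕ) → List ℕ → (ℕ → ℕ)
  | σ, [] => σ
  | σ, i :: s => applyStrat D (step D σ i) s

/-- Reachability `σ →* σ'`. -/
def Reaches (D : ℕ) (σ σ' : ℕ → ℕ) : Prop :=
  ∃ s : List ℕ, Legal D σ s ∧ applyStrat D σ s = σ'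

/-- A configuration is stable (a fixed point) if no transition is possible. -/
def Stable (D : ℕ) (σ : ℕ → ℕ) : Prop := ∀ i, σ i < D

/-- Initial configuration: `N` grains stacked on column 0 (height differences `(N,0,0,…)`). -/
def initConf (N : ℕ) : ℕ → ℕ := fun j => if j = 0 then N else 0

/-- `τ = π(N)`: the stable configuration reachable from `N` stacked grains. -/
def IsPi (D N : ℕ) (τ : ℕ → ℕ) : Prop := Reaches D (initConf N) τ ∧ Stable D τ

/-- `σ^{↓0}`: add one grain on column 0. -/
def addGrain (σ : ℕ → ℕ) : ℕ → ℕ := Function.update σ 0 (σ 0 + 1)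

/-- `s` is the leftmost (lexicographically minimal) strategy from `τ^{↓0}` to `τ'`. -/
def IsAvalancheFor (D : ℕ) (τ τ' : ℕ → ℕ) (s : List ℕ) : Prop :=
  Legal D (addGrain τ) s ∧ applyStrat D (addGrain τ) s = τ' ∧
    ∀ s' : List ℕ, Legal D (addGrain τ) s' → applyStrat D (addGrain τ) s' = τ' →
      ¬ List.Lex (· < ·) s' s

/-- `s` is the `k`-th avalanche: leftmost strategy from `π(k-1)^{↓0}` to `π(k)`. -/
def IsAvalanche (D k : ℕ) (s : List ℕ) : Prop :=
  ∃ τ τ' : ℕ → ℕ, IsPi D (k - 1) τ ∧ IsPi D k τ' ∧ IsAvalancheFor D τ τ' s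

/-- Position `t` (0-indexed) of strategy `s` is a peak: it exceeds all earlier fired columns. -/
def IsPeak (s : List ℕ) (t : ℕ) : Prop :=
  t < s.length ∧ ∀ t' < t, s.getD t' 0 < s.getD t 0

/-- Column `p` is a peak of `s`. -/
def IsPeakVal (s : List ℕ) (p : ℕ) : Prop :=
  ∃ t : ℕ, IsPeak s t ∧ s.getD t 0 = p

/-!
Suppose the `k`-th avalanche fires a column beyond `c` but no two consecutive columns up to
`c`. A column `j ≠ 0` of a stable configuration fires only after receiving grains from `j + 1`
or `j - 2`, so the avalanche fires the even columns up to about `c` and no odd ones, and the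
grain balance of each column then forces `π(k-1)` to begin with `(2,0)` repeated about `c / 2`
times. Let `b x` count the firings of column `x` while `k - 1` stacked grains stabilise to
`π(k-1)`. Along that prefix the balances, with the even columns eliminated, say that the
second differences `d` of `b` on odd columns satisfy `4 d (m+1) - d m = 4`: the integer
`3 d m - 4`, never zero, shrinks by a factor `4` every two columns, so `4 ^ (c / 2)` is at most
about `|3 d 0 - 4|`. That is `O(k)`, as column `0` fires at most `k / 2` times and
`2 b (x+1) ≤ 3 b x + 2`. Hence `c = O(log k)`, and `L k` is the first column at which the
avalanche has either stopped or fired two consecutive columns.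
-/

section Toppling

variable {D : ℕ}

theorem legal_append {σ : ℕ → ℕ} {u v : List ℕ} :
    Legal D σ (u ++ v) ↔ Legal D σ u ∧ Legal D (applyStrat D σ u) v := by
  induction u generalizing σ with
  | nil => simp [Legal, applyStrat]
  | cons i u ih => simp [Legal, applyStrat, ih, and_assoc]

theorem le_step_of_ne {σ : ℕ → ℕ} {i x : ℕ} (hx : x ≠ i) : σ x ≤ step D σ i x := by
  simp only [step]
  split_ifs <;> omega

theorem step_add_ite (hD : 2 ≤ D) {σ : ℕ → ℕ} {i : ℕ} (hi : D ≤ σ i) (x : ℕ) :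
    step D σ i x + D * (if i = x then 1 else 0) =
      σ x + (D - 1) * (if i = x + 1 then 1 else 0) + (if i + (D - 1) = x then 1 else 0) := by
  simp only [step]
  split_ifs <;> (try subst_vars) <;> omega

theorem applyStrat_add_count (hD : 2 ≤ D) {σ : ℕ → ℕ} {s : List ℕ} (hs : Legal D σ s) (x : ℕ) :
    applyStrat D σ s x + D * s.count x =
      σ x + (D - 1) * s.count (x + 1) + (s.map (· + (D - 1))).count x := by
  induction s generalizing σ with
  | nil => simp [applyStrat]
  | cons i s ih =>
    have h := step_add_ite hD hs.1 x
    have := ih hs.2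
    simp only [applyStrat, List.count_cons, List.map_cons, beq_iff_eq] at this ⊢
    linarith

theorem applyStrat_eq_of_perm (hD : 2 ≤ D) {σ : ℕ → ℕ} {s t : List ℕ} (hs : Legal D σ s)
    (ht : Legal D σ t) (hst : s.Perm t) : applyStrat D σ s = applyStrat D σ t := by
  funext x
  have h := applyStrat_add_count hD hs x
  rw [hst.count_eq, hst.count_eq, (hst.map _).count_eq] at h
  have := applyStrat_add_count hD ht x
  omega

theorem step_comm (hD : 2 ≤ D) {σ : ℕ → ℕ} {i j : ℕ} (hi : D ≤ σ i) (hj : D ≤ σ j) (hij : i ≠ j) :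
    step D (step D σ i) j = step D (step D σ j) i :=
  applyStrat_eq_of_perm (s := [i, j]) (t := [j, i]) hD
    ⟨hi, le_trans hj (le_step_of_ne hij.symm), trivial⟩
    ⟨hj, le_trans hi (le_step_of_ne hij), trivial⟩ (List.Perm.swap j i [])

def Topples (D : ℕ) (σ σ' : ℕ → ℕ) : Prop := ∃ i, KTrans D σ i σ'

theorem topples_diamond (hD : 2 ≤ D) {σ σ₁ σ₂ : ℕ → ℕ} (h₁ : Topples D σ σ₁)
    (h₂ : Topples D σ σ₂) :
    ∃ ρ, Relation.ReflGen (Topples D) σ₁ ρ ∧ Relation.ReflTransGen (Topples D) σ₂ ρ := by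
  obtain ⟨i, hi, rfl⟩ := h₁
  obtain ⟨j, hj, rfl⟩ := h₂
  rcases eq_or_ne i j with rfl | hij
  · exact ⟨_, .refl, .refl⟩
  · refine ⟨step D (step D σ i) j, .single ⟨j, le_trans hj (le_step_of_ne hij.symm), rfl⟩,
      .single ⟨i, le_trans hi (le_step_of_ne hij), step_comm hD hi hj hij⟩⟩

theorem Reaches.reflTransGen {σ τ : ℕ → ℕ} (h : Reaches D σ τ) :
    Relation.ReflTransGen (Topples D) σ τ := by
  obtain ⟨s, hs, rfl⟩ := h
  induction s generalizing σ with
  | nil => exact .refl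
  | cons i s ih => exact .head ⟨i, hs.1, rfl⟩ (ih hs.2)

theorem Stable.eq_of_reflTransGen {τ ρ : ℕ → ℕ} (hτ : Stable D τ)
    (h : Relation.ReflTransGen (Topples D) τ ρ) : τ = ρ := by
  rcases h.cases_head with h | ⟨_, ⟨i, hi, _⟩, _⟩
  · exact h
  · exact absurd hi (hτ i).not_ge

theorem IsPi.unique (hD : 2 ≤ D) {N : ℕ} {τ₁ τ₂ : ℕ → ℕ} (h₁ : IsPi D N τ₁) (h₂ : IsPi D N τ₂) :
    τ₁ = τ₂ := by
  obtain ⟨ρ, h₁ρ, h₂ρ⟩ := Relation.church_rosser (fun _ _ _ => topples_diamond hD)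
    h₁.1.reflTransGen h₂.1.reflTransGen
  rw [h₁.2.eq_of_reflTransGen h₁ρ, h₂.2.eq_of_reflTransGen h₂ρ]

theorem IsAvalanche.unique (hD : 2 ≤ D) {k : ℕ} {s t : List ℕ} (hs : IsAvalanche D k s)
    (ht : IsAvalanche D k t) : s = t := by
  obtain ⟨τ, τ', hτ, hτ', hs, hsτ', hs_min⟩ := hs
  obtain ⟨ρ, ρ', hρ, hρ', ht, htρ', ht_min⟩ := ht
  obtain rfl := hτ.unique hD hρ
  obtain rfl := hτ'.unique hD hρ'
  rcases trichotomous_of (List.Lex (· < ·)) s t with h | h | h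
  · exact absurd h (ht_min s hs hsτ')
  · exact h
  · exact absurd h (hs_min t ht htρ')

theorem sum_range_count {s : List ℕ} {M : ℕ} (hs : ∀ i ∈ s, i < M) :
    ∑ x ∈ Finset.range M, s.count x = s.length := by
  simpa using Multiset.sum_count_eq_card (s := Finset.range M) (m := (s : Multiset ℕ))
    (by simpa using hs)

theorem sum_applyStrat_add_mul_count_zero (hD : 2 ≤ D) {σ : ℕ → ℕ} {s : List ℕ}
    (hs : Legal D σ s) {M : ℕ} (hM : ∀ i ∈ s, i + (D - 1) < M) :
    ∑ x ∈ Finset.range M, applyStrat D σ s x + (D - 1) * s.count 0 =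
      ∑ x ∈ Finset.range M, σ x := by
  have h := Finset.sum_congr rfl fun x (_ : x ∈ Finset.range M) => applyStrat_add_count hD hs x
  simp only [Finset.sum_add_distrib, ← Finset.mul_sum] at h
  have h_all : ∑ x ∈ Finset.range M, s.count x = s.length :=
    sum_range_count fun i hi => by have := hM i hi; omega
  have h_succ : ∑ x ∈ Finset.range M, s.count (x + 1) + s.count 0 = s.length := by
    rw [← Finset.sum_range_succ' (s.count ·)]
    exact sum_range_count fun i hi => by have := hM i hi; omega
  have h_shift : ∑ x ∈ Finset.range M, (s.map (· + (D - 1))).count x = s.length := by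
    rw [sum_range_count (by simpa using hM), List.length_map]
  rw [h_all, h_shift, ← h_succ] at h
  obtain ⟨E, rfl⟩ : ∃ E, D = E + 1 := ⟨D - 1, by omega⟩
  simp only [Nat.add_sub_cancel] at h ⊢
  linarith

theorem le_applyStrat_add_count (hD : 2 ≤ D) {σ : ℕ → ℕ} {s : List ℕ} (hs : Legal D σ s)
    (x : ℕ) : σ x + (D - 1) * s.count (x + 1) ≤ applyStrat D σ s x + D * s.count x := by
  rw [applyStrat_add_count hD hs]
  omega

theorem sub_one_mul_count_zero_le (hD : 2 ≤ D) {N : ℕ} {s : List ℕ} (hs : Legal D (initConf N) s) :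
    (D - 1) * s.count 0 ≤ N := by
  have h := sum_applyStrat_add_mul_count_zero hD hs (M := s.sum + D) fun i hi => by
    have := List.le_sum_of_mem hi; omega
  have h_init : ∑ x ∈ Finset.range (s.sum + D), initConf N x = N := by
    simp [initConf]
    omega
  omega

end Toppling

theorem pow_le_abs_of_four_mul_sub_eq {d : ℕ → ℤ} {n : ℕ}
    (h : ∀ m < n, 4 * d (m + 1) - d m = 4) : 4 ^ n ≤ |3 * d 0 - 4| := by
  have scale (m) (hm : m ≤ n) : 4 ^ m * (3 * d m - 4) = 3 * d 0 - 4 := by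
    induction m with
    | zero => simp
    | succ m ih =>
      rw [← ih (by omega)]
      linear_combination 3 * 4 ^ m * h m (by omega)
  have hne : 1 ≤ |3 * d n - 4| := Int.one_le_abs (by omega)
  calc (4 : ℤ) ^ n ≤ 4 ^ n * |3 * d n - 4| := le_mul_of_one_le_right (by positivity) hne
    _ = |3 * d 0 - 4| := by
      rw [← scale n le_rfl, abs_mul, abs_of_pos (a := (4 : ℤ) ^ n) (by positivity)]

theorem addGrain_of_ne (σ : ℕ → ℕ) {x : ℕ} (hx : x ≠ 0) : addGrain σ x = σ x :=
  Function.update_of_ne hx _ _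

theorem addGrain_zero (σ : ℕ → ℕ) : addGrain σ 0 = σ 0 + 1 :=
  Function.update_self _ _ _

section KSPM3

variable {σ τ : ℕ → ℕ} {s : List ℕ}

theorem applyStrat_add_count_of_lt_two (hs : Legal 3 σ s) {x : ℕ} (hx : x < 2) :
    applyStrat 3 σ s x + 3 * s.count x = σ x + 2 * s.count (x + 1) := by
  have h := applyStrat_add_count (by norm_num) hs x
  have h_shift : (s.map (· + (3 - 1))).count x = 0 := List.count_eq_zero.2 (by simp; omega)
  omega

theorem applyStrat_add_count_add_two (hs : Legal 3 σ s) (x : ℕ) :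
    applyStrat 3 σ s (x + 2) + 3 * s.count (x + 2) =
      σ (x + 2) + 2 * s.count (x + 3) + s.count x := by
  rw [applyStrat_add_count (by norm_num) hs]
  exact congrArg _ (List.count_map_of_injective _ _ (add_left_injective 2) x)

theorem two_mul_count_succ_le (hs : Legal 3 σ s) (hst : Stable 3 (applyStrat 3 σ s)) (x : ℕ) :
    2 * s.count (x + 1) ≤ 3 * s.count x + 2 := by
  have := le_applyStrat_add_count (by norm_num) hs x
  have := hst x
  omega

theorem exists_feeder {u v : List ℕ} {j : ℕ} (hs : Legal 3 σ (u ++ j :: v)) (hj : σ j < 3) :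
    j + 1 ∈ u ∨ ∃ i ∈ u, i + 2 = j := by
  obtain ⟨hu, hj_fire, -⟩ := legal_append.1 hs
  by_contra! h
  rcases lt_or_ge j 2 with hj2 | hj2
  · have := applyStrat_add_count_of_lt_two hu hj2
    have : u.count (j + 1) = 0 := List.count_eq_zero.2 h.1
    omega
  · obtain ⟨i, rfl⟩ := Nat.exists_eq_add_of_le' hj2
    have := applyStrat_add_count_add_two hu i
    have : u.count (i + 3) = 0 := List.count_eq_zero.2 h.1
    have : u.count i = 0 := List.count_eq_zero.2 fun hi => h.2 i hi rfl
    omega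

theorem even_and_mem_of_no_consecutive (hτ : Stable 3 τ) (hs : Legal 3 (addGrain τ) s)
    {c : ℕ} (hpair : ∀ x ≤ c, x ∈ s → x + 1 ∉ s) {j : ℕ} (hj : j ∈ s) (hjc : j ≤ c) :
    j % 2 = 0 ∧ ∀ y ≤ j, y % 2 = 0 → y ∈ s := by
  induction j using Nat.strong_induction_on with
  | _ j ih =>
    rcases Nat.eq_zero_or_pos j with rfl | hj0
    · exact ⟨rfl, fun y hy _ => by rwa [Nat.le_zero.1 hy]⟩
    obtain ⟨u, v, rfl⟩ := List.append_of_mem hj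
    have hτj : addGrain τ j < 3 := addGrain_of_ne τ hj0.ne' ▸ hτ j
    rcases exists_feeder hs hτj with h | ⟨i, hi, rfl⟩
    · exact absurd (List.mem_append_left _ h) (hpair _ hjc hj)
    · obtain ⟨hi_even, hi_all⟩ := ih i (by omega) (List.mem_append_left _ hi) (by omega)
      refine ⟨by omega, fun y hy hy_even => ?_⟩
      rcases eq_or_lt_of_le hy with rfl | hy
      · exact hj
      · exact hi_all y (by omega) hy_even

theorem exists_mem_of_exists_gt (hτ : Stable 3 τ) (hs : Legal 3 (addGrain τ) s)
    {c : ℕ} (hfar : ∃ j ∈ s, c < j) : ∃ e ∈ s, e ≤ c ∧ c ≤ e + 1 := by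
  obtain ⟨j, v, hdrop⟩ : ∃ j v, s.dropWhile (· ≤ c) = j :: v := by
    match hd : s.dropWhile (· ≤ c) with
    | [] =>
      obtain ⟨j, hj, hcj⟩ := hfar
      exact absurd (by simpa using List.dropWhile_eq_nil_iff.1 hd j hj) hcj.not_ge
    | j :: v => exact ⟨j, v, rfl⟩
  have hcj : c < j := by
    simpa [hdrop] using List.head_dropWhile_not (· ≤ c) (l := s) (by simp [hdrop])
  have hsplit : s = s.takeWhile (· ≤ c) ++ j :: v := by
    rw [← hdrop, List.takeWhile_append_dropWhile]
  have hτj : addGrain τ j < 3 := by rw [addGrain_of_ne τ (by omega)]; exact hτ j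
  rcases exists_feeder (hsplit ▸ hs) hτj with h | ⟨e, he, rfl⟩
  · have : j + 1 ≤ c := by simpa using List.mem_takeWhile_imp h
    omega
  · have hec : e ≤ c := by simpa using List.mem_takeWhile_imp he
    exact ⟨e, hsplit ▸ List.mem_append_left _ he, hec, by omega⟩

theorem eq_two_zero_of_firings (hτ : Stable 3 τ) (hs : Legal 3 (addGrain τ) s)
    (hτ' : Stable 3 (applyStrat 3 (addGrain τ) s)) {e : ℕ}
    (heven : ∀ x ≤ e, x % 2 = 0 → x ∈ s) (hodd : ∀ x ≤ e, x % 2 = 1 → x ∉ s) :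
    ∀ x < e, τ x = if x % 2 = 0 then 2 else 0 := by
  have count_even (x) (hx : x ≤ e) (hx2 : x % 2 = 0) : 1 ≤ s.count x :=
    List.count_pos_iff.2 (heven x hx hx2)
  have count_odd (x) (hx : x ≤ e) (hx2 : x % 2 = 1) : s.count x = 0 :=
    List.count_eq_zero.2 (hodd x hx hx2)
  have balance_zero := applyStrat_add_count_of_lt_two hs (x := 0) (by norm_num)
  rw [addGrain_zero, zero_add] at balance_zero
  have count_le_one (x) (hx : x < e) (hx2 : x % 2 = 0) : s.count x ≤ 1 := by
    rcases x with _ | z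
    · have := count_odd 1 (by omega) rfl
      have := hτ 0
      omega
    · have := le_applyStrat_add_count (by norm_num) hs z
      rw [addGrain_of_ne τ (by omega)] at this
      have := count_odd z (by omega) (by omega)
      have := hτ' z
      omega
  intro x hx
  split_ifs with hx2
  · rcases lt_or_ge x 2 with hx0 | hx0
    · obtain rfl : x = 0 := by omega
      have := count_even 0 (by omega) rfl
      have := count_odd 1 (by omega) rfl
      have := hτ 0
      omega
    · obtain ⟨z, rfl⟩ := Nat.exists_eq_add_of_le' hx0
      have := applyStrat_add_count_add_two hs z
      rw [addGrain_of_ne τ (by omega)] at this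
      have := count_even (z + 2) (by omega) (by omega)
      have := count_odd (z + 3) (by omega) (by omega)
      have := count_le_one z (by omega) (by omega)
      have := hτ (z + 2)
      omega
  · have := le_applyStrat_add_count (by norm_num) hs x
    rw [addGrain_of_ne τ (by omega)] at this
    have := count_even (x + 1) (by omega) (by omega)
    have := count_odd x (by omega) (by omega)
    have := hτ' x
    omega

theorem eq_two_zero_of_no_consecutive {c : ℕ} (hτ : Stable 3 τ)
    (hs : Legal 3 (addGrain τ) s) (hτ' : Stable 3 (applyStrat 3 (addGrain τ) s))
    (hfar : ∃ j ∈ s, c < j) (hpair : ∀ x ≤ c, x ∈ s → x + 1 ∉ s) :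
    ∀ x < c - 1, τ x = if x % 2 = 0 then 2 else 0 := by
  obtain ⟨e, he, hec, hce⟩ := exists_mem_of_exists_gt hτ hs hfar
  have hodd (x) (hx : x ≤ e) (hx2 : x % 2 = 1) : x ∉ s := fun hxs =>
    absurd (even_and_mem_of_no_consecutive hτ hs hpair hxs (by omega)).1 (by omega)
  intro x hx
  exact eq_two_zero_of_firings hτ hs hτ'
    (even_and_mem_of_no_consecutive hτ hs hpair he hec).2 hodd x (by omega)

theorem pow_four_le_of_eq_two_zero {N n : ℕ} (hπ : IsPi 3 N τ)
    (hτ : ∀ x < 2 * n + 5, τ x = if x % 2 = 0 then 2 else 0) : 4 ^ n ≤ 24 * (N + 4) := by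
  obtain ⟨⟨r, hr, rfl⟩, hst⟩ := hπ
  set A := applyStrat 3 (initConf N) r
  have balance (x : ℕ) : A (x + 2) + 3 * r.count (x + 2) = 2 * r.count (x + 3) + r.count x := by
    have := applyStrat_add_count_add_two hr x
    rwa [initConf, if_neg (by omega), zero_add] at this
  have hd : (4 : ℤ) ^ n ≤ |3 * ((r.count 5 : ℤ) - 2 * r.count 3 + r.count 1) - 4| :=
    pow_le_abs_of_four_mul_sub_eq
      (d := fun m => (r.count (2 * m + 5) : ℤ) - 2 * r.count (2 * m + 3) + r.count (2 * m + 1))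
      fun m hm => by
        have h3 : A (2 * m + 3) + 3 * r.count (2 * m + 3) =
            2 * r.count (2 * m + 4) + r.count (2 * m + 1) := balance (2 * m + 1)
        have h5 : A (2 * m + 5) + 3 * r.count (2 * m + 5) =
            2 * r.count (2 * m + 6) + r.count (2 * m + 3) := balance (2 * m + 3)
        have h6 : A (2 * m + 6) + 3 * r.count (2 * m + 6) =
            2 * r.count (2 * m + 7) + r.count (2 * m + 4) := balance (2 * m + 4)
        have t3 : A (2 * m + 3) = 0 := by rw [hτ _ (by omega), if_neg (by omega)]
        have t5 : A (2 * m + 5) = 0 := by rw [hτ _ (by omega), if_neg (by omega)]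
        have t6 : A (2 * m + 6) = 2 := by rw [hτ _ (by omega), if_pos (by omega)]
        show 4 * ((r.count (2 * m + 7) : ℤ) - 2 * r.count (2 * m + 5) + r.count (2 * m + 3)) -
          ((r.count (2 * m + 5) : ℤ) - 2 * r.count (2 * m + 3) + r.count (2 * m + 1)) = 4
        omega
  have habs : |3 * ((r.count 5 : ℤ) - 2 * r.count 3 + r.count 1) - 4| ≤
      3 * r.count 5 + 6 * r.count 3 + 3 * r.count 1 + 4 :=
    abs_le.2 ⟨by omega, by omega⟩
  have grow (x : ℕ) : 2 * r.count (x + 1) ≤ 3 * r.count x + 2 := two_mul_count_succ_le hr hst x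
  have h0 : 2 * r.count 0 ≤ N := sub_one_mul_count_zero_le (by norm_num) hr
  have g0 : 2 * r.count 1 ≤ 3 * r.count 0 + 2 := grow 0
  have g1 : 2 * r.count 2 ≤ 3 * r.count 1 + 2 := grow 1
  have g2 : 2 * r.count 3 ≤ 3 * r.count 2 + 2 := grow 2
  have g3 : 2 * r.count 4 ≤ 3 * r.count 3 + 2 := grow 3
  have g4 : 2 * r.count 5 ≤ 3 * r.count 4 + 2 := grow 4
  linarith

end KSPM3

def transitionBound (k : ℕ) : ℕ := 2 * Nat.log 4 k + 16

theorem IsAvalanche.le_or_exists_consecutive {k : ℕ} {s : List ℕ} (hs : IsAvalanche 3 k s) :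
    (∀ j ∈ s, j ≤ transitionBound k) ∨ ∃ c ≤ transitionBound k, c ∈ s ∧ c + 1 ∈ s := by
  by_contra! h
  obtain ⟨τ, τ', hτ, hτ', hsl, rfl, -⟩ := hs
  have hprefix := eq_two_zero_of_no_consecutive hτ.2 hsl hτ'.2 h.1 h.2
  have hpow := pow_four_le_of_eq_two_zero hτ (n := Nat.log 4 k + 5) fun x hx =>
    hprefix x (by unfold transitionBound; omega)
  have hk : k < 4 ^ (Nat.log 4 k + 1) := Nat.lt_pow_succ_log_self (by norm_num) k
  rw [show 4 ^ (Nat.log 4 k + 5) = 4 ^ (Nat.log 4 k + 1) * 256 by ring] at hpow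
  omega

noncomputable def transitionColumn (s : List ℕ) : ℕ :=
  sInf {c | (∀ j ∈ s, j ≤ c) ∨ (c ∈ s ∧ c + 1 ∈ s)}

theorem transitionColumn_le {s : List ℕ} {B : ℕ}
    (h : (∀ j ∈ s, j ≤ B) ∨ ∃ c ≤ B, c ∈ s ∧ c + 1 ∈ s) : transitionColumn s ≤ B := by
  rcases h with h | ⟨c, hc, hpair⟩
  · exact Nat.sInf_le (Or.inl h)
  · exact (Nat.sInf_le (Or.inr hpair)).trans hc

theorem transitionColumn_mem {s : List ℕ} (h : ∃ j ∈ s, transitionColumn s < j) :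
    transitionColumn s ∈ s ∧ transitionColumn s + 1 ∈ s := by
  have hne : {c | (∀ j ∈ s, j ≤ c) ∨ (c ∈ s ∧ c + 1 ∈ s)}.Nonempty :=
    ⟨s.sum, Or.inl fun _ => List.le_sum_of_mem⟩
  obtain ⟨j, hj, hlt⟩ := h
  exact (Nat.sInf_mem hne).resolve_left fun hall => (hall j hj).not_gt hlt

open Classical in
noncomputable def avalanche (k : ℕ) : List ℕ :=
  if h : ∃ s, IsAvalanche 3 k s then h.choose else []

theorem avalanche_eq {k : ℕ} {s : List ℕ} (hs : IsAvalanche 3 k s) : avalanche k = s := by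
  have h : ∃ s, IsAvalanche 3 k s := ⟨s, hs⟩
  rw [avalanche, dif_pos h]
  exact h.choose_spec.unique (by norm_num) hs

theorem transitionColumn_avalanche_le (k : ℕ) :
    transitionColumn (avalanche k) ≤ transitionBound k := by
  by_cases h : ∃ s, IsAvalanche 3 k s
  · obtain ⟨s, hs⟩ := h
    rw [avalanche_eq hs]
    exact transitionColumn_le hs.le_or_exists_consecutive
  · rw [avalanche, dif_neg h]
    exact transitionColumn_le (Or.inl (by simp))

theorem transitionBound_le_log {k : ℕ} (hk : 2 ≤ k) :
    (transitionBound k : ℝ) ≤ 26 * Real.log k := by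
  have hlog4 : 1 ≤ Real.log 4 := by
    rw [Real.le_log_iff_exp_le (by norm_num)]
    linarith [Real.exp_one_lt_d9]
  have hlog2 : 0.6931471803 < Real.log k :=
    Real.log_two_gt_d9.trans_le (Real.log_le_log (by norm_num) (by exact_mod_cast hk))
  have hnat : (Nat.log 4 k : ℝ) ≤ Real.log k := by
    have := Real.natLog_le_logb k 4
    rw [Real.logb] at this
    push_cast at this
    exact this.trans (div_le_self (by linarith) hlog4)
  unfold transitionBound
  push_cast
  linarith

/-- For KSPM(3) there is a function L(k) = O(log k) such that whenever the k-th
avalanche fires some column beyond L(k), it fires both L(k) and L(k)+1. -/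
theorem log_transitional_phase :
    ∃ L : ℕ → ℕ,
      (∃ C : ℝ, 0 < C ∧ ∀ k : ℕ, 2 ≤ k → (L k : ℝ) ≤ C * Real.log k) ∧
      ∀ (k : ℕ) (s : List ℕ), 1 ≤ k → IsAvalanche 3 k s →
        (∃ j ∈ s, L k < j) → (L k ∈ s ∧ L k + 1 ∈ s) := by
  refine ⟨fun k => transitionColumn (avalanche k), ⟨26, by norm_num, fun k hk => ?_⟩,
    fun k s _ hs => ?_⟩
  · exact (Nat.cast_le.2 (transitionColumn_avalanche_le k)).trans (transitionBound_le_log hk)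
  · simpa only [avalanche_eq hs] using transitionColumn_mem
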